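/- Let M = ⊕_{k≥0} ℚ(q)·f^{(k)}m₀ be the Verma module over U_q(sl_2) with highest weight −n−2 (n ∈ ℤ⁺), where m₀ is a highest weight vector, realized inside its completion C(M) = ⊕_{k ≥ −n−1} ℚ(q)·f^{(k)}m₀ with f acting injectively. Then for 0 ≤ i ≤ n one has f^{(i)}·f^{(−n−1)}m₀ = a·q^{ni}·f^{(i−n−1)}m₀ for some unit a of 𝔸 (a rational function in 1 + q𝔸 up to sign), and for i ≥ n+1 one has f^{(i)}·f^{(−n−1)}m₀ = a·q^{(i−1)(n+1)}·f^{(i−n−1)}m₀ for some unit a of 𝔸. -/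

import Mathlib

/-!
Each quantum integer `[k+1] = q^{-k} (1 + q^2 + ⋯ + q^{2k})` is `q^{-k}` times a unit of `𝔸`,
so `[k]! = q^{-C(k,2)}·(unit)`, and `[-k]! = ±[k]!` has the same order. Hence the coefficient
`[i-n-1]! / ([i]! [-n-1]!)` is a unit times `q^E` with `E = C(i,2) + C(n+1,2) - C(m,2)`, where
`m = n-i+1` for `i ≤ n` and `m = i-n-1` for `i > n`; this `E` is `ni`, resp. `(i-1)(n+1)`.
-/

open Polynomial

noncomputable section

abbrev K : Type := RatFunc ℚ

def q : K := RatFunc.X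

/-- The subring `𝔸 ⊂ ℚ(q)` of rational functions regular at `q = 0`. -/
def 𝔸 : Subring K where
  carrier := {x : K | x.denom.eval 0 ≠ 0}
  zero_mem' := by simp [RatFunc.denom_zero]
  one_mem' := by simp [RatFunc.denom_one]
  add_mem' := by
    intro x y hx hy
    obtain ⟨c, hc⟩ := RatFunc.denom_add_dvd x y
    simp only [Set.mem_setOf_eq] at *
    intro h0
    exact mul_ne_zero hx hy (by
      rw [← Polynomial.eval_mul, hc, Polynomial.eval_mul, h0, zero_mul])
  mul_mem' := by
    intro x y hx hy
    obtain ⟨c, hc⟩ := RatFunc.denom_mul_dvd x y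
    simp only [Set.mem_setOf_eq] at *
    intro h0
    exact mul_ne_zero hx hy (by
      rw [← Polynomial.eval_mul, hc, Polynomial.eval_mul, h0, zero_mul])
  neg_mem' := by
    intro x hx
    have hneg : (-x) = (-1 : K) * x := by ring
    obtain ⟨c, hc⟩ := RatFunc.denom_mul_dvd (-1 : K) x
    rw [← hneg] at hc
    have hd1 : (-1 : K).denom = 1 := by
      have := RatFunc.denom_algebraMap (-1 : Polynomial ℚ)
      simpa using this
    rw [hd1, one_mul] at hc
    simp only [Set.mem_setOf_eq] at *
    intro h0
    exact hx (by
      rw [hc, Polynomial.eval_mul, h0, zero_mul])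

/-- Quantum integer `[k] = (q^k - q^{-k})/(q - q⁻¹)`. -/
def qint (k : ℤ) : K := (q ^ k - q ^ (-k)) / (q - q⁻¹)

/-- Quantum factorial `[n]! = [1][2]⋯[n]`. -/
def qfac : ℕ → K
  | 0 => 1
  | n + 1 => qfac n * qint (n + 1)

/-- Quantum binomial coefficient. -/
def qbinom (m n : ℕ) : K := qfac m / (qfac n * qfac (m - n))

end

noncomputable section

/-- The formal factorial `[k]!` for `k ∈ ℤ`, with `[−k]! = (−1)^k [k]!` for `k > 0`. -/
def zfac (k : ℤ) : K :=
  if 0 ≤ k then qfac k.toNat else (-1) ^ (-k).toNat * qfac (-k).toNat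

/-- The completion `C(M)` of the Verma module of highest weight `−n−2`, with
basis `v k = f^{(k)}m₀`, `k ≥ −n−1`, inside `ℤ →₀ ℚ(q)`. -/
abbrev CM : Type := ℤ →₀ K

def v (k : ℤ) : CM := Finsupp.single k 1

/-- `f^{(i)}·f^{(−n−1)}m₀ = ([i−n−1]!/([i]!·[−n−1]!))·f^{(i−n−1)}m₀`. -/
def fdivApply (n i : ℕ) : CM :=
  (zfac ((i : ℤ) - n - 1) / (zfac i * zfac (-(n : ℤ) - 1))) • v ((i : ℤ) - n - 1)

open Finset

lemma algebraMap_div_mem_𝔸 (p r : ℚ[X]) (hr : r.eval 0 ≠ 0) :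
    algebraMap ℚ[X] K p / algebraMap ℚ[X] K r ∈ 𝔸 := by
  obtain ⟨c, hc⟩ := RatFunc.denom_div_dvd p r
  show _ ≠ 0
  intro h0
  rw [hc, eval_mul, h0, zero_mul] at hr
  exact hr rfl

lemma exists_units_𝔸_coe_eq_algebraMap (p : ℚ[X]) (hp : p.eval 0 ≠ 0) :
    ∃ u : 𝔸ˣ, (u : K) = algebraMap ℚ[X] K p := by
  have hp0 : algebraMap ℚ[X] K p ≠ 0 :=
    RatFunc.algebraMap_ne_zero fun h => hp (by rw [h, eval_zero])
  have mem_𝔸 : ∀ p : ℚ[X], algebraMap ℚ[X] K p ∈ 𝔸 := fun p => by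
    simpa using algebraMap_div_mem_𝔸 p 1 (by simp)
  refine ⟨⟨⟨_, mem_𝔸 p⟩, ⟨_, algebraMap_div_mem_𝔸 1 p hp⟩, ?_, ?_⟩, rfl⟩ <;>
    ext <;> simp [hp0]

lemma q_ne_zero : q ≠ 0 := RatFunc.X_ne_zero

lemma q_sub_q_inv_ne_zero : q - q⁻¹ ≠ 0 := by
  intro h
  have hsq : (X ^ 2 : ℚ[X]) = 1 := by
    apply RatFunc.algebraMap_injective ℚ
    rw [map_pow, map_one, RatFunc.algebraMap_X, ← q, sq]
    nth_rewrite 2 [sub_eq_zero.mp h]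
    exact mul_inv_cancel₀ q_ne_zero
  simpa using congrArg (coeff · 0) hsq

/-- `x ∈ q^E 𝔸ˣ`, i.e. `x` has order `E` at `q = 0`. -/
def HasQOrder (x : K) (E : ℤ) : Prop := ∃ u : 𝔸ˣ, x = u * q ^ E

namespace HasQOrder

lemma mul {x y : K} {E F : ℤ} (hx : HasQOrder x E) (hy : HasQOrder y F) :
    HasQOrder (x * y) (E + F) := by
  obtain ⟨u, rfl⟩ := hx
  obtain ⟨w, rfl⟩ := hy
  refine ⟨u * w, ?_⟩
  rw [zpow_add₀ q_ne_zero, Units.val_mul, Subring.coe_mul]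
  ring

lemma inv {x : K} {E : ℤ} (hx : HasQOrder x E) : HasQOrder x⁻¹ (-E) := by
  obtain ⟨u, rfl⟩ := hx
  refine ⟨u⁻¹, ?_⟩
  have hu : ((u : 𝔸) : K) * ((u⁻¹ : 𝔸ˣ) : 𝔸) = 1 := by
    rw [← Subring.coe_mul, Units.mul_inv, OneMemClass.coe_one]
  rw [mul_inv, zpow_neg, inv_eq_of_mul_eq_one_right hu]

lemma div {x y : K} {E F : ℤ} (hx : HasQOrder x E) (hy : HasQOrder y F) :
    HasQOrder (x / y) (E - F) := by
  rw [div_eq_mul_inv, sub_eq_add_neg]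
  exact hx.mul hy.inv

lemma of_eq {x : K} {E F : ℤ} (hx : HasQOrder x E) (h : E = F) : HasQOrder x F := h ▸ hx

end HasQOrder

lemma hasQOrder_neg_one_pow_mul {x : K} {E : ℤ} (k : ℕ) (hx : HasQOrder x E) :
    HasQOrder ((-1) ^ k * x) E := by
  simpa using (show HasQOrder ((-1) ^ k) 0 from ⟨(-1) ^ k, by simp⟩).mul hx

lemma qint_natCast_add_one (k : ℕ) :
    qint (k + 1) = q ^ (-(k : ℤ)) * ∑ j ∈ range (k + 1), (q ^ 2) ^ j := by
  have hgeom := geom_sum_mul (q ^ 2) (k + 1)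
  rw [qint, div_eq_iff q_sub_q_inv_ne_zero, show (k : ℤ) + 1 = (k + 1 : ℕ) by push_cast; rfl,
    zpow_neg, zpow_neg, zpow_natCast, zpow_natCast]
  field_simp [q_ne_zero]
  linear_combination (-q ^ (k + 1)) * hgeom

lemma hasQOrder_qint_natCast_add_one (k : ℕ) : HasQOrder (qint (k + 1)) (-k) := by
  obtain ⟨u, hu⟩ := exists_units_𝔸_coe_eq_algebraMap (∑ j ∈ range (k + 1), (X ^ 2) ^ j)
    (by simp [eval_finsetSum, sum_range_succ'])
  refine ⟨u, ?_⟩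
  rw [qint_natCast_add_one, hu, mul_comm]
  simp [q]

lemma hasQOrder_qfac (k : ℕ) : HasQOrder (qfac k) (-(k.choose 2 : ℕ)) := by
  induction k with
  | zero => exact ⟨1, by simp [qfac]⟩
  | succ k ih =>
    refine (ih.mul (hasQOrder_qint_natCast_add_one k)).of_eq ?_
    rw [Nat.choose_succ_succ', Nat.choose_one_right]
    push_cast
    ring

lemma hasQOrder_zfac_natCast (k : ℕ) : HasQOrder (zfac k) (-(k.choose 2 : ℕ)) := by
  simpa [zfac] using hasQOrder_qfac k

lemma hasQOrder_zfac_neg_natCast_sub_one (k : ℕ) :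
    HasQOrder (zfac (-(k : ℤ) - 1)) (-((k + 1).choose 2 : ℕ)) := by
  rw [zfac, if_neg (by omega), show (-(-(k : ℤ) - 1)).toNat = k + 1 by omega]
  exact hasQOrder_neg_one_pow_mul _ (hasQOrder_qfac _)

lemma exists_unit_smul_eq_of_hasQOrder {c : K} {E : ℤ} (hc : HasQOrder c E) (x : CM) :
    ∃ a ∈ 𝔸, (∃ b ∈ 𝔸, a * b = 1) ∧ c • x = (a * q ^ E) • x := by
  obtain ⟨u, rfl⟩ := hc
  refine ⟨u, (u : 𝔸).2, ⟨((u⁻¹ : 𝔸ˣ) : 𝔸), ((u⁻¹ : 𝔸ˣ) : 𝔸).2, ?_⟩, rfl⟩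
  rw [← Subring.coe_mul, Units.mul_inv, OneMemClass.coe_one]

/-- For `0 ≤ i ≤ n`, `f^{(i)}·f^{(−n−1)}m₀ = a·q^{ni}·f^{(i−n−1)}m₀` for some unit
`a ∈ 𝔸^×`, and for `i ≥ n+1`, `f^{(i)}·f^{(−n−1)}m₀ = a·q^{(i−1)(n+1)}·f^{(i−n−1)}m₀`
for some unit `a ∈ 𝔸^×`. -/
theorem fdiv_on_completion (n i : ℕ) :
    (i ≤ n → ∃ a ∈ 𝔸, (∃ b ∈ 𝔸, a * b = 1) ∧
      fdivApply n i = (a * q ^ ((n : ℤ) * i)) • v ((i : ℤ) - n - 1)) ∧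
    (n + 1 ≤ i → ∃ a ∈ 𝔸, (∃ b ∈ 𝔸, a * b = 1) ∧
      fdivApply n i = (a * q ^ (((i : ℤ) - 1) * ((n : ℤ) + 1))) • v ((i : ℤ) - n - 1)) := by
  unfold fdivApply
  have hden := (hasQOrder_zfac_natCast i).mul (hasQOrder_zfac_neg_natCast_sub_one n)
  constructor
  · intro hi
    have hnum : HasQOrder (zfac ((i : ℤ) - n - 1)) (-((n - i + 1).choose 2 : ℕ)) := by
      rw [show (i : ℤ) - n - 1 = -((n - i : ℕ) : ℤ) - 1 by omega]
      exact hasQOrder_zfac_neg_natCast_sub_one _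
    refine exists_unit_smul_eq_of_hasQOrder ((hnum.div hden).of_eq ?_) _
    qify [hi]
    simp only [Nat.cast_choose_two]
    push_cast [hi]
    ring
  · intro hi
    have hnum : HasQOrder (zfac ((i : ℤ) - n - 1)) (-((i - n - 1).choose 2 : ℕ)) := by
      rw [show (i : ℤ) - n - 1 = ((i - n - 1 : ℕ) : ℤ) by omega]
      exact hasQOrder_zfac_natCast _
    refine exists_unit_smul_eq_of_hasQOrder ((hnum.div hden).of_eq ?_) _
    qify [hi]
    simp only [Nat.cast_choose_two]
    push_cast [Nat.sub_sub, hi]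
    ring

end
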